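/- Let n ≥ 2 and fix an indeterminate q. Then for all integers j ≥ 0, all b ∈ B and all μ = (μ_1,…,μ_n) ∈ ℤ^n, the unrestricted one-dimensional sum of the level-1 perfect crystal of type D_{n+1}^{(2)} satisfies g_j(b,μ) = Σ_γ q^{Σ_{i∈B, i≠0, i≠φ} γ_i(γ_i−1) + Σ_{i∈B} H(b,i)·γ_i} · [j; γ]_{q²}, where the sum is over all γ = (γ_i)_{i∈B} ∈ ℤ_{≥0}^{2n+2} with γ_k − γ_{k̄} = μ_k for 1 ≤ k ≤ n and Σ_{i∈B} γ_i = j, and [j; γ]_{q²} := (q²)_j / Π_{i∈B} (q²)_{γ_i} is the Gaussian multinomial in the variable q², with (q²)_m := Π_{i=1}^m (1 − q^{2i}). -/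

import Mathlib

/-! Both sides `F_j(b, μ)` satisfy `F_{j+1}(b, μ) = Σ_c q^{(j+1) H(b,c)} F_j(c, μ - cont c)` and
agree for `j = 0`. For the one-dimensional sum this is splitting off the letter `c = b_j` of a path.
For the multinomial sum it is a `q`-Pascal rule: as
`(1 - q^{2γ_c}) [j+1; γ]_{q²} = (1 - q^{2(j+1)}) [j; γ - e_c]_{q²}`, it reduces to the identity
`(1 - q^{2J}) q^{E_b(γ)} = Σ_c (1 - q^{2γ_c}) q^{J H(b,c) + E_c(γ) - H(c,c) γ_c}` for
`J = Σ_i γ_i` and `E_b(γ) = Σ_i H(b,i) γ_i`. This identity telescopes: listing `B` as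
`1 ≺ ⋯ ≺ n ≺ 0 ≺ n̄ ≺ ⋯ ≺ 1̄ ≺ φ`, the summand of `c` is `q^{γ_φ + J w(c)} (P_c - P_{c+1})`, where
`P_p = q^{2(γ_0 + ⋯ + γ_{p-1})}` and `w(c) = H(b,c) - [c = φ]` takes one value before a threshold
position and another one after it. -/

open Finset

noncomputable section

/-- The indeterminate `q`, living in the field of rational functions `ℚ(q)`. -/
def q : RatFunc ℚ := RatFunc.X

/-! The level-1 perfect crystal of type `D_{n+1}^{(2)}` is
`B = {1,…,n,0,n̄,…,1̄,φ}` (with `2n+2` elements), where `B∖{φ}` is totally ordered by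
`1 ≺ ⋯ ≺ n ≺ 0 ≺ n̄ ≺ ⋯ ≺ 1̄`. We encode it as `Fin (2n+2)`: position `p < n` is the
letter `p+1`, position `n` is the letter `0`, position `n+r` (`1 ≤ r ≤ n`) is the barred
letter `\overline{n+1-r}`, and position `2n+1` is `φ`. -/

/-- The energy function: `H(b,b') = 0` if `b,b' ≠ φ` with `b ≺ b'`, or if
`(b,b') = (0,0)` or `(φ,φ)`; `H(b,b') = 1` if exactly one of `b,b'` is `φ`; and
`H(b,b') = 2` if `b,b' ≠ φ`, `b ⪰ b'` and `(b,b') ≠ (0,0)`. -/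
def H (n : ℕ) (b b' : Fin (2 * n + 2)) : ℤ :=
  if (b : ℕ) = 2 * n + 1 ∧ (b' : ℕ) = 2 * n + 1 then 0
  else if (b : ℕ) = 2 * n + 1 ∨ (b' : ℕ) = 2 * n + 1 then 1
  else if (b : ℕ) = n ∧ (b' : ℕ) = n then 0
  else if (b : ℕ) < (b' : ℕ) then 0 else 2

/-- Contents: the letter `k` (`1 ≤ k ≤ n`) has content `e_k`, the letter `k̄` has content
`-e_k`, and the letters `0` and `φ` have content `0`; here `ℤ^n` is indexed by `Fin n`,
with index `k-1` corresponding to `μ_k`. -/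
def cont (n : ℕ) (b : Fin (2 * n + 2)) (k : Fin n) : ℤ :=
  if (b : ℕ) = (k : ℕ) then 1 else if (b : ℕ) = 2 * n - (k : ℕ) then -1 else 0

/-- The unrestricted one-dimensional sum `g_j(b,μ)`: the sum of
`q^{Σ_{i=1}^j i·H(b_{i+1},b_i)}` over all sequences `(b_1,…,b_j) ∈ B^j` of total content
`μ`, with `b_{j+1} = b`. -/
def g (n j : ℕ) (b : Fin (2 * n + 2)) (μ : Fin n → ℤ) : RatFunc ℚ :=
  ∑ p ∈ Finset.univ.filter (fun p : Fin (j + 1) → Fin (2 * n + 2) =>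
      p (Fin.last j) = b ∧
      ∀ k, (∑ i : Fin j, cont n (p i.castSucc) k) = μ k),
    q ^ (∑ i : Fin j, ((i : ℤ) + 1) * H n (p i.succ) (p i.castSucc))

/-- `(q²)_m = Π_{i=1}^m (1 - q^{2i})`. -/
def qfac2 (m : ℕ) : RatFunc ℚ := ∏ i ∈ Finset.range m, (1 - q ^ (2 * (i + 1)))

lemma q_ne_zero : q ≠ 0 := RatFunc.X_ne_zero

lemma q_pow_ne_one {k : ℕ} (hk : k ≠ 0) : q ^ k ≠ 1 := by
  intro h
  have hX : (Polynomial.X ^ k : Polynomial ℚ) = 1 :=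
    RatFunc.algebraMap_injective ℚ (by simpa [q] using h)
  simpa [hk] using congrArg Polynomial.natDegree hX

lemma one_sub_q_pow_ne_zero {k : ℕ} (hk : k ≠ 0) : 1 - q ^ k ≠ 0 :=
  sub_ne_zero.2 (q_pow_ne_one hk).symm

lemma qfac2_succ (m : ℕ) : qfac2 (m + 1) = qfac2 m * (1 - q ^ (2 * (m + 1))) :=
  prod_range_succ _ _

lemma qfac2_ne_zero (m : ℕ) : qfac2 m ≠ 0 :=
  prod_ne_zero_iff.2 fun _ _ => one_sub_q_pow_ne_zero (by omega)

def qMultinomial2 (j : ℕ) {ι : Type*} [Fintype ι] (γ : ι → ℕ) : RatFunc ℚ :=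
  qfac2 j / ∏ i, qfac2 (γ i)

lemma qMultinomial2_add_single {ι : Type*} [Fintype ι] [DecidableEq ι] (j : ℕ) (γ : ι → ℕ)
    (c : ι) :
    qMultinomial2 (j + 1) (γ + Pi.single c 1) * (1 - q ^ (2 * (γ c + 1))) =
      qMultinomial2 j γ * (1 - q ^ (2 * (j + 1))) := by
  have hprod : ∏ i, qfac2 ((γ + Pi.single c 1 : ι → ℕ) i) =
      (∏ i, qfac2 (γ i)) * (1 - q ^ (2 * (γ c + 1))) := by
    rw [← Fintype.prod_ite_eq' c fun i => 1 - q ^ (2 * (γ i + 1)), ← prod_mul_distrib]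
    refine prod_congr rfl fun i _ => ?_
    rcases eq_or_ne i c with rfl | hi
    · simp [qfac2_succ]
    · simp [hi]
  have hne : ∏ i, qfac2 (γ i) ≠ 0 := prod_ne_zero_iff.2 fun _ _ => qfac2_ne_zero _
  have hne' : (1 : RatFunc ℚ) - q ^ (2 * (γ c + 1)) ≠ 0 := one_sub_q_pow_ne_zero (by omega)
  rw [qMultinomial2, qMultinomial2, hprod, qfac2_succ]
  field_simp

lemma sum_range_ite_mul_sub {K : Type*} [CommRing K] (f : ℕ → K) (u v : K) {t N : ℕ}
    (ht : t ≤ N) :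
    ∑ p ∈ range N, (if p < t then u else v) * (f p - f (p + 1)) =
      u * (f 0 - f t) + v * (f t - f N) := by
  rw [← sum_range_add_sum_Ico _ ht, ← sum_range_sub', mul_sum,
    ← neg_sub_neg (f N), ← sum_Ico_sub (fun p => -f p) ht, mul_sum]
  congr 1
  · exact sum_congr rfl fun p hp => by rw [if_pos (mem_range.1 hp)]
  · exact sum_congr rfl fun p hp => by rw [if_neg (mem_Ico.1 hp).1.not_gt, neg_sub_neg]

def partialSum {m : ℕ} (γ : Fin m → ℕ) (p : ℕ) : ℤ :=
  ∑ i ∈ univ.filter (fun i : Fin m => (i : ℕ) < p), (γ i : ℤ)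

section PartialSum

variable {m : ℕ} (γ : Fin m → ℕ)

lemma partialSum_zero : partialSum γ 0 = 0 := by
  simp [partialSum]

lemma partialSum_succ (i : Fin m) : partialSum γ (i + 1) = partialSum γ i + γ i := by
  simp only [partialSum, sum_filter]
  rw [← Fintype.sum_ite_eq' i fun i => (γ i : ℤ), ← sum_add_distrib]
  refine sum_congr rfl fun x _ => ?_
  simp only [Fin.ext_iff]
  split_ifs <;> omega

lemma partialSum_of_le {p : ℕ} (hp : m ≤ p) : partialSum γ p = ∑ i, (γ i : ℤ) := by
  rw [partialSum, filter_true_of_mem fun i _ => i.isLt.trans_le hp]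

end PartialSum

lemma partialSum_last {m : ℕ} (γ : Fin (m + 1) → ℕ) :
    partialSum γ m = ∑ i, (γ i : ℤ) - γ (Fin.last m) := by
  have h := partialSum_succ γ (Fin.last m)
  rw [Fin.val_last, partialSum_of_le γ le_rfl] at h
  rw [h, add_sub_cancel_right]

def diagExponent (n : ℕ) (γ : Fin (2 * n + 2) → ℕ) : ℤ :=
  ∑ i ∈ univ.filter (fun i : Fin (2 * n + 2) => (i : ℕ) ≠ n ∧ (i : ℕ) ≠ 2 * n + 1),
    (γ i : ℤ) * ((γ i : ℤ) - 1)

def energy (n : ℕ) (b : Fin (2 * n + 2)) (γ : Fin (2 * n + 2) → ℕ) : ℤ :=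
  ∑ i, H n b i * (γ i : ℤ)

def threshold (n : ℕ) (b : Fin (2 * n + 2)) : ℕ :=
  if (b : ℕ) = n then n else b + 1

section Energy

variable {n : ℕ}

lemma H_self (c : Fin (2 * n + 2)) :
    H n c c = if (c : ℕ) = n ∨ (c : ℕ) = 2 * n + 1 then 0 else 2 := by
  unfold H
  split_ifs <;> omega

lemma H_of_ne_last {b : Fin (2 * n + 2)} (hb : b ≠ Fin.last _) (i : Fin (2 * n + 2)) :
    H n b i = (if (i : ℕ) < threshold n b then 2 else 0) + if i = Fin.last _ then 1 else 0 := by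
  have hb' : (b : ℕ) ≠ 2 * n + 1 := fun h => hb (Fin.ext h)
  have hi := i.isLt
  simp only [H, threshold, Fin.ext_iff, Fin.val_last]
  split_ifs <;> omega

lemma H_last_left (i : Fin (2 * n + 2)) :
    H n (Fin.last _) i = 1 - if i = Fin.last _ then 1 else 0 := by
  simp only [H, Fin.ext_iff, Fin.val_last, true_and, true_or, if_true]
  split_ifs <;> omega

lemma diagExponent_add_single (γ : Fin (2 * n + 2) → ℕ) (c : Fin (2 * n + 2)) :
    diagExponent n (γ + Pi.single c 1) = diagExponent n γ + H n c c * γ c := by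
  simp only [diagExponent, sum_filter]
  rw [← Fintype.sum_ite_eq' c fun i => H n c c * γ i, ← sum_add_distrib]
  refine sum_congr rfl fun i _ => ?_
  rcases eq_or_ne i c with rfl | hi
  · simp only [H_self, Pi.add_apply, Pi.single_eq_same, if_true]
    push_cast
    split_ifs <;> first | omega | ring
  · simp [hi]

lemma energy_add_single (b : Fin (2 * n + 2)) (γ : Fin (2 * n + 2) → ℕ) (c : Fin (2 * n + 2)) :
    energy n b (γ + Pi.single c 1) = energy n b γ + H n b c := by
  simp [energy, Pi.single_apply, mul_add, sum_add_distrib]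

lemma energy_of_ne_last (γ : Fin (2 * n + 2) → ℕ) {b : Fin (2 * n + 2)} (hb : b ≠ Fin.last _) :
    energy n b γ = 2 * partialSum γ (threshold n b) + γ (Fin.last _) := by
  simp only [energy, H_of_ne_last hb, add_mul, ite_mul, zero_mul, one_mul, sum_add_distrib,
    sum_ite_eq', mem_univ, if_true, partialSum, sum_filter, mul_sum, mul_ite, mul_zero]

lemma energy_last (γ : Fin (2 * n + 2) → ℕ) :
    energy n (Fin.last _) γ = ∑ i, (γ i : ℤ) - γ (Fin.last _) := by
  simp only [energy, H_last_left, sub_mul, one_mul, ite_mul, zero_mul, sum_sub_distrib,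
    sum_ite_eq', mem_univ, if_true]

lemma energy_sub_H_self_mul (γ : Fin (2 * n + 2) → ℕ) (c : Fin (2 * n + 2)) :
    energy n c γ - H n c c * γ c =
      γ (Fin.last _) + 2 * partialSum γ c - if c = Fin.last _ then ∑ i, (γ i : ℤ) else 0 := by
  rcases eq_or_ne c (Fin.last _) with rfl | hc
  · rw [energy_last, H_self, Fin.val_last, partialSum_last]
    simp only [or_true, if_true]
    ring
  · have hc' : (c : ℕ) ≠ 2 * n + 1 := fun h => hc (Fin.ext h)
    rw [energy_of_ne_last γ hc, H_self, if_neg hc, threshold]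
    by_cases hcn : (c : ℕ) = n
    · simp only [hcn, true_or, if_true]
      ring
    · simp only [hcn, hc', or_self, if_false, partialSum_succ]
      ring

end Energy

section Core

variable {n : ℕ} (γ : Fin (2 * n + 2) → ℕ)

lemma one_sub_q_pow_mul_zpow_eq_mul_sub (b c : Fin (2 * n + 2)) :
    (1 - q ^ (2 * γ c)) *
        q ^ ((∑ i, (γ i : ℤ)) * H n b c + energy n c γ - H n c c * γ c) =
      q ^ (γ (Fin.last _) + (∑ i, (γ i : ℤ)) * (H n b c - if c = Fin.last _ then 1 else 0)) *
        (q ^ (2 * partialSum γ c) - q ^ (2 * partialSum γ (c + 1))) := by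
  have hexp : (∑ i, (γ i : ℤ)) * H n b c + energy n c γ - H n c c * γ c =
      (γ (Fin.last _) + (∑ i, (γ i : ℤ)) * (H n b c - if c = Fin.last _ then 1 else 0)) +
        2 * partialSum γ c := by
    rw [add_sub_assoc, energy_sub_H_self_mul]
    split_ifs <;> ring
  rw [hexp, partialSum_succ, mul_add 2, zpow_add₀ q_ne_zero _ (2 * partialSum γ c),
    zpow_add₀ q_ne_zero (2 * partialSum γ c), ← zpow_natCast]
  push_cast
  ring

lemma sum_one_sub_q_pow_mul_zpow_eq_of_ite (b : Fin (2 * n + 2)) {t : ℕ} (ht : t ≤ 2 * n + 2)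
    (u v : ℤ)
    (hw : ∀ c, H n b c - (if c = Fin.last _ then 1 else 0) = if (c : ℕ) < t then u else v) :
    ∑ c, (1 - q ^ (2 * γ c)) *
        q ^ ((∑ i, (γ i : ℤ)) * H n b c + energy n c γ - H n c c * γ c) =
      q ^ (γ (Fin.last _) + (∑ i, (γ i : ℤ)) * u) * (1 - q ^ (2 * partialSum γ t)) +
        q ^ (γ (Fin.last _) + (∑ i, (γ i : ℤ)) * v) *
          (q ^ (2 * partialSum γ t) - q ^ (2 * ∑ i, (γ i : ℤ))) := by
  set e : ℤ → RatFunc ℚ := fun w => q ^ ((γ (Fin.last _) : ℤ) + (∑ i, (γ i : ℤ)) * w)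
  set P : ℕ → RatFunc ℚ := fun p => q ^ (2 * partialSum γ p)
  have hsummand : ∀ c : Fin (2 * n + 2),
      (1 - q ^ (2 * γ c)) * q ^ ((∑ i, (γ i : ℤ)) * H n b c + energy n c γ - H n c c * γ c) =
        (if (c : ℕ) < t then e u else e v) * (P c - P (c + 1)) := fun c => by
    rw [one_sub_q_pow_mul_zpow_eq_mul_sub, hw c]
    split_ifs <;> rfl
  rw [sum_congr rfl fun c _ => hsummand c,
    Fin.sum_univ_eq_sum_range (fun p => (if p < t then e u else e v) * (P p - P (p + 1))),
    sum_range_ite_mul_sub P _ _ ht]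
  simp only [P, partialSum_zero, partialSum_of_le γ le_rfl, mul_zero, zpow_zero]
  rfl

lemma one_sub_q_pow_mul_zpow_energy (b : Fin (2 * n + 2)) :
    (1 - q ^ (2 * ∑ i, γ i)) * q ^ energy n b γ =
      ∑ c, (1 - q ^ (2 * γ c)) *
        q ^ ((∑ i, (γ i : ℤ)) * H n b c + energy n c γ - H n c c * γ c) := by
  have hJ : q ^ (2 * ∑ i, γ i) = q ^ (2 * ∑ i, (γ i : ℤ)) := by
    rw [← zpow_natCast]
    push_cast
    rfl
  rw [hJ]
  rcases eq_or_ne b (Fin.last _) with rfl | hb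
  · have hw : ∀ c : Fin (2 * n + 2), H n (Fin.last _) c - (if c = Fin.last _ then 1 else 0) =
        if (c : ℕ) < 2 * n + 1 then 1 else -1 := fun c => by
      rw [H_last_left]
      simp only [Fin.ext_iff, Fin.val_last]
      split_ifs <;> omega
    rw [sum_one_sub_q_pow_mul_zpow_eq_of_ite γ _ (by omega) 1 (-1) hw, energy_last,
      partialSum_last]
    generalize ∑ i, (γ i : ℤ) = J
    generalize (γ (Fin.last _) : ℤ) = m
    have hm : q ^ m ≠ 0 := zpow_ne_zero _ q_ne_zero
    simp only [mul_one, mul_neg, two_mul, sub_eq_add_neg, zpow_add₀ q_ne_zero, zpow_neg]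
    field_simp
    ring
  · have hw : ∀ c, H n b c - (if c = Fin.last _ then 1 else 0) =
        if (c : ℕ) < threshold n b then 2 else 0 := fun c => by
      rw [H_of_ne_last hb, add_sub_cancel_right]
    have ht : threshold n b ≤ 2 * n + 2 := by
      unfold threshold
      split_ifs <;> omega
    rw [sum_one_sub_q_pow_mul_zpow_eq_of_ite γ _ ht 2 0 hw, energy_of_ne_last γ hb]
    simp only [mul_zero, add_zero, mul_comm _ (2 : ℤ), zpow_add₀ q_ne_zero]
    ring

end Core

def content (n : ℕ) (γ : Fin (2 * n + 2) → ℕ) (k : Fin n) : ℤ :=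
  (γ ⟨k, k.isLt.trans_le (by omega)⟩ : ℤ) -
    (γ ⟨2 * n - k, (Nat.sub_le _ _).trans_lt (by omega)⟩ : ℤ)

def admissible (n j : ℕ) (μ : Fin n → ℤ) : Finset (Fin (2 * n + 2) → ℕ) :=
  (Nat.antidiagonalTuple (2 * n + 2) j).filter fun γ => ∀ k, content n γ k = μ k

lemma content_add_single {n : ℕ} (γ : Fin (2 * n + 2) → ℕ) (c : Fin (2 * n + 2)) (k : Fin n) :
    content n (γ + Pi.single c 1) k = content n γ k + cont n c k := by
  have hk := k.isLt
  simp only [content, cont, Pi.add_apply, Pi.single_apply, Fin.ext_iff]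
  split_ifs <;> push_cast <;> omega

lemma add_single_mem_admissible_iff {n j : ℕ} {μ : Fin n → ℤ} {γ : Fin (2 * n + 2) → ℕ}
    {c : Fin (2 * n + 2)} :
    γ + Pi.single c 1 ∈ admissible n (j + 1) μ ↔ γ ∈ admissible n j (μ - cont n c) := by
  simp only [admissible, mem_filter, Nat.mem_antidiagonalTuple, content_add_single, Pi.sub_apply,
    eq_sub_iff_add_eq, Pi.add_apply, sum_add_distrib, Finset.sum_pi_single', mem_univ, if_true,
    add_left_inj]

lemma sum_admissible_add_single {M : Type*} [AddCommMonoid M] {n j : ℕ} (μ : Fin n → ℤ)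
    (c : Fin (2 * n + 2)) (G : (Fin (2 * n + 2) → ℕ) → M) (hG : ∀ γ, γ c = 0 → G γ = 0) :
    ∑ γ ∈ admissible n j (μ - cont n c), G (γ + Pi.single c 1) =
      ∑ γ ∈ admissible n (j + 1) μ, G γ := by
  rw [← sum_filter_of_ne (p := fun γ => γ c ≠ 0) fun γ _ hγ h => hγ (hG γ h)]
  have hsplit : ∀ γ : Fin (2 * n + 2) → ℕ, γ c ≠ 0 → γ - Pi.single c 1 + Pi.single c 1 = γ :=
    fun γ hγ => funext fun i => by
      rcases eq_or_ne i c with rfl | hi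
      · simp only [Pi.add_apply, Pi.sub_apply, Pi.single_eq_same]
        omega
      · simp [hi]
  refine sum_nbij' (· + Pi.single c 1) (· - Pi.single c 1) (fun γ hγ => ?_) (fun γ hγ => ?_)
    (fun γ _ => add_tsub_cancel_right γ _) (fun γ hγ => hsplit γ (mem_filter.1 hγ).2)
    (fun _ _ => rfl)
  · simpa [add_single_mem_admissible_iff] using hγ
  · obtain ⟨hγ, hc⟩ := mem_filter.1 hγ
    rw [← add_single_mem_admissible_iff, hsplit γ hc]
    exact hγ

def multinomialSum (n j : ℕ) (b : Fin (2 * n + 2)) (μ : Fin n → ℤ) : RatFunc ℚ :=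
  ∑ γ ∈ admissible n j μ, q ^ (diagExponent n γ + energy n b γ) * qMultinomial2 j γ

section MultinomialSum

variable {n : ℕ}

def pascalTerm (j : ℕ) (b c : Fin (2 * n + 2)) (γ : Fin (2 * n + 2) → ℕ) : RatFunc ℚ :=
  q ^ diagExponent n γ * qMultinomial2 (j + 1) γ *
    ((1 - q ^ (2 * γ c)) * q ^ (((j : ℤ) + 1) * H n b c + energy n c γ - H n c c * γ c))

lemma pascalTerm_add_single (j : ℕ) (b c : Fin (2 * n + 2)) (γ : Fin (2 * n + 2) → ℕ) :
    pascalTerm j b c (γ + Pi.single c 1) =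
      (1 - q ^ (2 * (j + 1))) * (q ^ (((j : ℤ) + 1) * H n b c) *
        (q ^ (diagExponent n γ + energy n c γ) * qMultinomial2 j γ)) := by
  have hexp : diagExponent n γ + H n c c * γ c +
      (((j : ℤ) + 1) * H n b c + (energy n c γ + H n c c) - H n c c * ((γ c + 1 : ℕ) : ℤ)) =
      ((j : ℤ) + 1) * H n b c + (diagExponent n γ + energy n c γ) := by
    push_cast; ring
  calc pascalTerm j b c (γ + Pi.single c 1)
      = q ^ (diagExponent n γ + H n c c * γ c) *
          q ^ (((j : ℤ) + 1) * H n b c + (energy n c γ + H n c c) - H n c c * ((γ c + 1 : ℕ) : ℤ)) *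
          (qMultinomial2 (j + 1) (γ + Pi.single c 1) * (1 - q ^ (2 * (γ c + 1)))) := by
        simp only [pascalTerm, diagExponent_add_single, energy_add_single, Pi.add_apply,
          Pi.single_eq_same]
        ring
    _ = _ := by
        rw [qMultinomial2_add_single, ← zpow_add₀ q_ne_zero, hexp, zpow_add₀ q_ne_zero]
        ring

lemma pascalTerm_eq_zero {j : ℕ} {b c : Fin (2 * n + 2)} {γ : Fin (2 * n + 2) → ℕ} (h : γ c = 0) :
    pascalTerm j b c γ = 0 := by
  simp [pascalTerm, h]

lemma sum_pascalTerm {j : ℕ} (b : Fin (2 * n + 2)) {γ : Fin (2 * n + 2) → ℕ}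
    (hγ : ∑ i, γ i = j + 1) :
    ∑ c, pascalTerm j b c γ =
      (1 - q ^ (2 * (j + 1))) *
        (q ^ (diagExponent n γ + energy n b γ) * qMultinomial2 (j + 1) γ) := by
  have hJ : (∑ i, (γ i : ℤ)) = (j : ℤ) + 1 := by exact_mod_cast hγ
  simp only [pascalTerm, ← mul_sum, ← hJ, ← one_sub_q_pow_mul_zpow_energy, hγ, zpow_add₀ q_ne_zero]
  ring

lemma multinomialSum_succ (j : ℕ) (b : Fin (2 * n + 2)) (μ : Fin n → ℤ) :
    multinomialSum n (j + 1) b μ =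
      ∑ c, q ^ (((j : ℤ) + 1) * H n b c) * multinomialSum n j c (μ - cont n c) := by
  refine mul_left_cancel₀ (one_sub_q_pow_ne_zero (k := 2 * (j + 1)) (by omega)) ?_
  calc (1 - q ^ (2 * (j + 1))) * multinomialSum n (j + 1) b μ
      = ∑ γ ∈ admissible n (j + 1) μ, ∑ c, pascalTerm j b c γ := by
        rw [multinomialSum, mul_sum]
        refine sum_congr rfl fun γ hγ => (sum_pascalTerm b ?_).symm
        exact Nat.mem_antidiagonalTuple.1 (mem_filter.1 hγ).1
    _ = ∑ c, ∑ γ ∈ admissible n j (μ - cont n c), pascalTerm j b c (γ + Pi.single c 1) := by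
        rw [sum_comm]
        exact sum_congr rfl fun c _ =>
          (sum_admissible_add_single μ c _ fun _ => pascalTerm_eq_zero).symm
    _ = _ := by
        simp only [pascalTerm_add_single, multinomialSum, mul_sum]

lemma multinomialSum_zero (b : Fin (2 * n + 2)) (μ : Fin n → ℤ) :
    multinomialSum n 0 b μ = if ∀ k, 0 = μ k then 1 else 0 := by
  rw [multinomialSum, admissible, Nat.antidiagonalTuple_zero_right, sum_filter, sum_singleton]
  simp [content, diagExponent, energy, qMultinomial2, qfac2]

end MultinomialSum

def pathEnergy (n : ℕ) {j : ℕ} (p : Fin (j + 1) → Fin (2 * n + 2)) : ℤ :=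
  ∑ i : Fin j, ((i : ℤ) + 1) * H n (p i.succ) (p i.castSucc)

lemma pathEnergy_snoc (n : ℕ) {j : ℕ} (p : Fin (j + 1) → Fin (2 * n + 2)) (b : Fin (2 * n + 2)) :
    pathEnergy n (Fin.snoc p b : Fin (j + 2) → Fin (2 * n + 2)) =
      pathEnergy n p + ((j : ℤ) + 1) * H n b (p (Fin.last j)) := by
  rw [pathEnergy, Fin.sum_univ_castSucc]
  simp only [Fin.succ_castSucc, Fin.snoc_castSucc, Fin.succ_last, Fin.snoc_last, Fin.val_castSucc,
    Fin.val_last, pathEnergy]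

lemma sum_cont_snoc (n : ℕ) {j : ℕ} (w : Fin j → Fin (2 * n + 2)) (c : Fin (2 * n + 2))
    (k : Fin n) :
    ∑ i, cont n ((Fin.snoc w c : Fin (j + 1) → Fin (2 * n + 2)) i) k =
      ∑ i, cont n (w i) k + cont n c k := by
  simp [Fin.sum_univ_castSucc]

lemma g_eq_sum_snoc (n j : ℕ) (b : Fin (2 * n + 2)) (μ : Fin n → ℤ) :
    g n j b μ = ∑ w : Fin j → Fin (2 * n + 2),
      if ∀ k, ∑ i, cont n (w i) k = μ k then
        q ^ pathEnergy n (Fin.snoc w b : Fin (j + 1) → _)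
      else 0 := by
  rw [g, sum_filter, ← (Fin.snocEquiv fun _ => Fin (2 * n + 2)).sum_comp, Fintype.sum_prod_type,
    sum_comm]
  refine sum_congr rfl fun w _ => ?_
  simp [Fin.snocEquiv, ite_and, pathEnergy]

lemma g_zero (n : ℕ) (b : Fin (2 * n + 2)) (μ : Fin n → ℤ) :
    g n 0 b μ = if ∀ k, 0 = μ k then 1 else 0 := by
  simp [g_eq_sum_snoc, pathEnergy]

lemma g_succ (n j : ℕ) (b : Fin (2 * n + 2)) (μ : Fin n → ℤ) :
    g n (j + 1) b μ = ∑ c, q ^ (((j : ℤ) + 1) * H n b c) * g n j c (μ - cont n c) := by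
  simp only [g_eq_sum_snoc, Finset.mul_sum]
  rw [← (Fin.snocEquiv fun _ => Fin (2 * n + 2)).sum_comp, Fintype.sum_prod_type]
  refine sum_congr rfl fun c _ => sum_congr rfl fun w _ => ?_
  simp only [Fin.snocEquiv_apply, sum_cont_snoc, pathEnergy_snoc, Fin.snoc_last, Pi.sub_apply,
    eq_sub_iff_add_eq, mul_ite, mul_zero, zpow_add₀ q_ne_zero]
  exact if_congr Iff.rfl (mul_comm _ _) rfl

/-- the `q`-multinomial formula for the unrestricted one-dimensional sum of
the level-1 perfect crystal of type `D_{n+1}^{(2)}`.  The first sum in the exponent runs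
over `i ∈ B` with `i ≠ 0, φ` (i.e. over positions `≠ n, 2n+1`), and the Gaussian
multinomial `[j;γ]_{q²}` is taken in the variable `q²`. -/
theorem statement5 (n : ℕ) (j : ℕ) (b : Fin (2 * n + 2)) (μ : Fin n → ℤ) :
    g n j b μ =
      ∑ γ ∈ (Finset.Nat.antidiagonalTuple (2 * n + 2) j).filter
          (fun γ => ∀ k : Fin n,
            (γ (⟨k, by have := k.isLt; omega⟩ : Fin (2 * n + 2)) : ℤ) -
              (γ (⟨2 * n - k, by omega⟩ : Fin (2 * n + 2)) : ℤ) = μ k),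
        q ^ ((∑ i ∈ Finset.univ.filter
                (fun i : Fin (2 * n + 2) => (i : ℕ) ≠ n ∧ (i : ℕ) ≠ 2 * n + 1),
                (γ i : ℤ) * ((γ i : ℤ) - 1)) +
              ∑ i, H n b i * (γ i : ℤ)) *
          (qfac2 j / ∏ i, qfac2 (γ i)) := by
  show g n j b μ = multinomialSum n j b μ
  induction j generalizing b μ with
  | zero => rw [g_zero, multinomialSum_zero]
  | succ j ih => simp only [g_succ, multinomialSum_succ, ih]

end
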